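/- arXiv:2511.23206 — 9 statements merged into one kernel-verified Lean document; each statement's English description precedes it below -/
import Mathlib

section
/- Let C be a category with pullbacks of split epimorphisms along split epimorphisms, and let M be a class of spans in C that contains the span part of every local product. If every split span (e1 : A → E, p1 : E → A, e2 : C → E, p2 : E → C) whose pair (p1, p2) is jointly monic and whose span (E, p1, p2) belongs to M is M-compatible, then every directed kite whose direction span belongs to M is admissible. -/
open CategoryTheory

universe v u

section Defs

variable {C : Type u} [Category.{v} C]

/-- A pair of morphisms with common domain is jointly monic. -/
def JointlyMonic {E A B : C} (p1 : E ⟶ A) (p2 : E ⟶ B) : Prop :=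
  ∀ {Z : C} (u v : Z ⟶ E), u ≫ p1 = v ≫ p1 → u ≫ p2 = v ≫ p2 → u = v

/-- `(P, p1, p2)` is a pullback of `f` and `g`. -/
structure IsPb {P A B X : C} (p1 : P ⟶ A) (p2 : P ⟶ B) (f : A ⟶ X) (g : B ⟶ X) : Prop where
  comm : p1 ≫ f = p2 ≫ g
  univ : ∀ {Z : C} (a : Z ⟶ A) (b : Z ⟶ B), a ≫ f = b ≫ g →
    ∃! l : Z ⟶ P, l ≫ p1 = a ∧ l ≫ p2 = b

/-- The data of a span `(D, d, c)` with `d : D ⟶ D0` and `c : D ⟶ D1`. -/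
structure SpanData (C : Type u) [Category.{v} C] where
  D : C
  D0 : C
  D1 : C
  d : D ⟶ D0
  c : D ⟶ D1

/-- The morphism `d` admits a kernel pair. -/
def HasKernelPair {D D0 : C} (d : D ⟶ D0) : Prop :=
  ∃ (K : C) (k1 k2 : K ⟶ D), IsPb k1 k2 d d

/-- The (raw) data of a directed kite. -/
structure DiKite (C : Type u) [Category.{v} C] where
  A : C
  B : C
  Cc : C
  D : C
  D0 : C
  D1 : C
  f : A ⟶ B
  r : B ⟶ A
  g : Cc ⟶ B
  s : B ⟶ Cc
  α : A ⟶ D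
  β : B ⟶ D
  γ : Cc ⟶ D
  d : D ⟶ D0
  c : D ⟶ D1

/-- The directed kite axioms. -/
def DiKite.IsKite (K : DiKite C) : Prop :=
  K.r ≫ K.f = 𝟙 K.B ∧ K.s ≫ K.g = 𝟙 K.B ∧
  K.r ≫ K.α = K.β ∧ K.s ≫ K.γ = K.β ∧
  K.α ≫ K.d = K.f ≫ K.β ≫ K.d ∧
  K.g ≫ K.β ≫ K.c = K.γ ≫ K.c

/-- The direction span of a directed kite. -/
def DiKite.spanPart (K : DiKite C) : SpanData C := ⟨K.D, K.D0, K.D1, K.d, K.c⟩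

/-- `m` is a multiplication for the directed kite `K`,
relative to pullback projections `π1`, `π2` of `K.f`, `K.g`. -/
def IsMult (K : DiKite C) {P : C} (π1 : P ⟶ K.A) (π2 : P ⟶ K.Cc) (m : P ⟶ K.D) : Prop :=
  (∀ e1 : K.A ⟶ P, e1 ≫ π1 = 𝟙 K.A → e1 ≫ π2 = K.f ≫ K.s → e1 ≫ m = K.α) ∧
  (∀ e2 : K.Cc ⟶ P, e2 ≫ π1 = K.g ≫ K.r → e2 ≫ π2 = 𝟙 K.Cc → e2 ≫ m = K.γ) ∧
  m ≫ K.d = π2 ≫ K.γ ≫ K.d ∧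
  m ≫ K.c = π1 ≫ K.α ≫ K.c

/-- The directed kite `K` is admissible: it has exactly one multiplication. -/
def DiKite.Admissible (K : DiKite C) : Prop :=
  ∀ {P : C} (π1 : P ⟶ K.A) (π2 : P ⟶ K.Cc), IsPb π1 π2 K.f K.g →
    ∃! m : P ⟶ K.D, IsMult K π1 π2 m

/-- `(e1, p1, e2, p2)` is a local product. -/
def IsLocalProduct {A Cc E : C} (e1 : A ⟶ E) (p1 : E ⟶ A) (e2 : Cc ⟶ E) (p2 : E ⟶ Cc) :
    Prop :=
  ∃ (B : C) (f : A ⟶ B) (r : B ⟶ A) (g : Cc ⟶ B) (s : B ⟶ Cc),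
    r ≫ f = 𝟙 B ∧ s ≫ g = 𝟙 B ∧ IsPb p1 p2 f g ∧
    e1 ≫ p1 = 𝟙 A ∧ e1 ≫ p2 = f ≫ s ∧ e2 ≫ p1 = g ≫ r ∧ e2 ≫ p2 = 𝟙 Cc

/-- `(T, dom, mid, cod)` is the object of compatible triples of the span `(D, d, c)`
(the kernel pair construction). -/
structure IsTripleObj {D D0 D1 : C} (d : D ⟶ D0) (c : D ⟶ D1) {T : C}
    (dom mid cod : T ⟶ D) : Prop where
  d_dom : dom ≫ d = mid ≫ d
  c_mid : mid ≫ c = cod ≫ c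
  univ : ∀ {Z : C} (x y z : Z ⟶ D), x ≫ d = y ≫ d → y ≫ c = z ≫ c →
    ∃! l : Z ⟶ T, l ≫ dom = x ∧ l ≫ mid = y ∧ l ≫ cod = z

/-- `(Bx, q1, q2, q3, q4)` is the box object of the span `(D, d, c)`. -/
structure IsBoxObj {D D0 D1 : C} (d : D ⟶ D0) (c : D ⟶ D1) {Bx : C}
    (q1 q2 q3 q4 : Bx ⟶ D) : Prop where
  h12 : q1 ≫ d = q2 ≫ d
  h23 : q2 ≫ c = q3 ≫ c
  h34 : q3 ≫ d = q4 ≫ d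
  h41 : q4 ≫ c = q1 ≫ c
  univ : ∀ {Z : C} (x y z w : Z ⟶ D), x ≫ d = y ≫ d → y ≫ c = z ≫ c →
    z ≫ d = w ≫ d → w ≫ c = x ≫ c →
    ∃! l : Z ⟶ Bx, l ≫ q1 = x ∧ l ≫ q2 = y ∧ l ≫ q3 = z ∧ l ≫ q4 = w

/-- A natural pregroupoid structure on the span `(D, d, c)`. -/
structure PregroupoidStr {D D0 D1 : C} (d : D ⟶ D0) (c : D ⟶ D1) where
  p : ∀ {Z : C} (x y z : Z ⟶ D), x ≫ d = y ≫ d → y ≫ c = z ≫ c → (Z ⟶ D)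
  natural : ∀ {Z' Z : C} (h : Z' ⟶ Z) (x y z : Z ⟶ D)
    (hd : x ≫ d = y ≫ d) (hc : y ≫ c = z ≫ c)
    (hd' : (h ≫ x) ≫ d = (h ≫ y) ≫ d) (hc' : (h ≫ y) ≫ c = (h ≫ z) ≫ c),
    p (h ≫ x) (h ≫ y) (h ≫ z) hd' hc' = h ≫ p x y z hd hc
  comp_d : ∀ {Z : C} (x y z : Z ⟶ D) (hd : x ≫ d = y ≫ d) (hc : y ≫ c = z ≫ c),
    p x y z hd hc ≫ d = z ≫ d
  comp_c : ∀ {Z : C} (x y z : Z ⟶ D) (hd : x ≫ d = y ≫ d) (hc : y ≫ c = z ≫ c),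
    p x y z hd hc ≫ c = x ≫ c
  p_xyy : ∀ {Z : C} (x y : Z ⟶ D) (hd : x ≫ d = y ≫ d) (hc : y ≫ c = y ≫ c),
    p x y y hd hc = x
  p_yyz : ∀ {Z : C} (y z : Z ⟶ D) (hd : y ≫ d = y ≫ d) (hc : y ≫ c = z ≫ c),
    p y y z hd hc = z

/-- Associativity of a pregroupoid structure. -/
def PregroupoidStr.Assoc {D D0 D1 : C} {d : D ⟶ D0} {c : D ⟶ D1}
    (P : PregroupoidStr d c) : Prop :=
  ∀ {Z : C} (u v x y z : Z ⟶ D)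
    (huv : u ≫ d = v ≫ d) (hvx : v ≫ c = x ≫ c)
    (hxy : x ≫ d = y ≫ d) (hyz : y ≫ c = z ≫ c)
    (h1 : v ≫ c = (P.p x y z hxy hyz) ≫ c)
    (h2 : (P.p u v x huv hvx) ≫ d = y ≫ d),
    P.p u v (P.p x y z hxy hyz) huv h1 = P.p (P.p u v x huv hvx) y z h2 hyz

end Defs

/-- `C` has pullbacks of split epimorphisms along split epimorphisms. -/
def HasPbSplit (C : Type u) [Category.{v} C] : Prop :=
  ∀ {A B Cc : C} (f : A ⟶ B) (r : B ⟶ A) (g : Cc ⟶ B) (s : B ⟶ Cc),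
    r ≫ f = 𝟙 B → s ≫ g = 𝟙 B →
    ∃ (P : C) (p1 : P ⟶ A) (p2 : P ⟶ Cc), IsPb p1 p2 f g

/-- The class `M` contains the span part of every local product. -/
def ContainsLocalProducts {C : Type u} [Category.{v} C] (M : Set (SpanData C)) : Prop :=
  ∀ {A B Cc E : C} (f : A ⟶ B) (r : B ⟶ A) (g : Cc ⟶ B) (s : B ⟶ Cc)
    (p1 : E ⟶ A) (p2 : E ⟶ Cc),
    r ≫ f = 𝟙 B → s ≫ g = 𝟙 B → IsPb p1 p2 f g →
    SpanData.mk E A Cc p1 p2 ∈ M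

/-- The class `M` is closed under the kernel pair construction. -/
def ClosedUnderKP {C : Type u} [Category.{v} C] (M : Set (SpanData C)) : Prop :=
  ∀ S ∈ M, ∀ {T : C} (dom mid cod : T ⟶ S.D),
    IsTripleObj S.d S.c dom mid cod → SpanData.mk T S.D S.D dom cod ∈ M

/-- A split span `(e1, p1, e2, p2)` is `M`-compatible. -/
def MCompatible {C : Type u} [Category.{v} C] (M : Set (SpanData C)) {E A Cc : C}
    (e1 : A ⟶ E) (p1 : E ⟶ A) (e2 : Cc ⟶ E) (p2 : E ⟶ Cc) : Prop :=
  ∀ S ∈ M, ∀ (α : A ⟶ S.D) (γ : Cc ⟶ S.D),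
    (p2 ≫ e2) ≫ (p1 ≫ e1) = (p1 ≫ e1) ≫ (p2 ≫ e2) →
    (p2 ≫ e2) ≫ p1 ≫ α = (p1 ≫ e1) ≫ p2 ≫ γ →
    p1 ≫ α ≫ S.d = (p2 ≫ e2) ≫ p1 ≫ α ≫ S.d →
    p2 ≫ γ ≫ S.c = (p1 ≫ e1) ≫ p2 ≫ γ ≫ S.c →
    ∃! m : E ⟶ S.D, e1 ≫ m = α ∧ e2 ≫ m = γ ∧
      m ≫ S.d = p2 ≫ γ ≫ S.d ∧ m ≫ S.c = p1 ≫ α ≫ S.c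

theorem statement0 {C : Type u} [Category.{v} C] (hPb : HasPbSplit C)
    (M : Set (SpanData C)) (hLP : ContainsLocalProducts M)
    (hcomp : ∀ {E A Cc : C} (e1 : A ⟶ E) (p1 : E ⟶ A) (e2 : Cc ⟶ E) (p2 : E ⟶ Cc),
      e1 ≫ p1 = 𝟙 A → e2 ≫ p2 = 𝟙 Cc → JointlyMonic p1 p2 →
      SpanData.mk E A Cc p1 p2 ∈ M → MCompatible M e1 p1 e2 p2) :
    ∀ K : DiKite C, K.IsKite → K.spanPart ∈ M → K.Admissible := by
  intro K hK hM
  obtain ⟨hrf, hsg, hrα, hsγ, hαd, hβc⟩ := hK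
  intro P π1 π2 hP
  obtain ⟨e1, ⟨he11, he12⟩, -⟩ := hP.univ (𝟙 K.A) (K.f ≫ K.s)
    (by rw [Category.id_comp, Category.assoc, hsg, Category.comp_id])
  obtain ⟨e2, ⟨he21, he22⟩, -⟩ := hP.univ (K.g ≫ K.r) (𝟙 K.Cc)
    (by rw [Category.id_comp, Category.assoc, hrf, Category.comp_id])
  have jm : JointlyMonic π1 π2 := by
    intro Z u v h1 h2
    obtain ⟨l, -, hu⟩ := hP.univ (u ≫ π1) (u ≫ π2)
      (by rw [Category.assoc, Category.assoc, hP.comm])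
    rw [hu u ⟨rfl, rfl⟩, hu v ⟨h1.symm, h2.symm⟩]
  have hmem : SpanData.mk P K.A K.Cc π1 π2 ∈ M :=
    hLP K.f K.r K.g K.s π1 π2 hrf hsg hP
  have hmc := hcomp e1 π1 e2 π2 he11 he22 jm hmem K.spanPart hM K.α K.γ
  have comm' : π1 ≫ K.f = π2 ≫ K.g := hP.comm
  have c1 : (π2 ≫ e2) ≫ π1 ≫ e1 = (π1 ≫ e1) ≫ π2 ≫ e2 := by
    apply jm
    · simp only [Category.assoc, reassoc_of% he11, reassoc_of% he12,
        reassoc_of% he21, reassoc_of% he22, he11, he21, Category.comp_id,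
        reassoc_of% hsg, Category.id_comp]
      simp only [← Category.assoc]
      rw [comm']
    · simp only [Category.assoc, reassoc_of% he11, reassoc_of% he12,
        reassoc_of% he21, reassoc_of% he22, he12, he22, Category.comp_id,
        reassoc_of% hrf, Category.id_comp]
      simp only [← Category.assoc]
      rw [comm']
  have c2 : (π2 ≫ e2) ≫ π1 ≫ K.α = (π1 ≫ e1) ≫ π2 ≫ K.γ := by
    simp only [Category.assoc, reassoc_of% he21, reassoc_of% he12]
    rw [hrα, hsγ]
    simp only [← Category.assoc]
    rw [comm']
  have c3 : π1 ≫ K.α ≫ K.d = (π2 ≫ e2) ≫ π1 ≫ K.α ≫ K.d := by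
    simp only [Category.assoc, reassoc_of% he21, reassoc_of% hrα]
    simp only [← Category.assoc]
    rw [← comm']
    simp only [Category.assoc]
    rw [hαd]
  have c4 : π2 ≫ K.γ ≫ K.c = (π1 ≫ e1) ≫ π2 ≫ K.γ ≫ K.c := by
    simp only [Category.assoc, reassoc_of% he12, reassoc_of% hsγ]
    simp only [← Category.assoc]
    rw [comm']
    simp only [Category.assoc]
    rw [hβc]
  obtain ⟨m, ⟨hm1, hm2, hm3, hm4⟩, hmu⟩ := hmc c1 c2 c3 c4
  refine ⟨m, ⟨?_, ?_, hm3, hm4⟩, ?_⟩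
  · intro e1' h1' h2'
    have : e1' = e1 := jm e1' e1 (h1'.trans he11.symm) (h2'.trans he12.symm)
    rw [this]; exact hm1
  · intro e2' h1' h2'
    have : e2' = e2 := jm e2' e2 (h1'.trans he21.symm) (h2'.trans he22.symm)
    rw [this]; exact hm2
  · intro m' ⟨hm1', hm2', hm3', hm4'⟩
    exact hmu m' ⟨hm1' e1 he11 he12, hm2' e2 he21 he22, hm3', hm4'⟩
end

section
/- Let C be a category with pullbacks of split epimorphisms along split epimorphisms. Let (f1, f0) be a morphism of reflexive graphs from (C1, C0, d, e, c) to (C1', C0', d', e', c') (i.e. d'∘f1 = f0∘d, c'∘f1 = f0∘c, f1∘e = e'∘f0), and suppose both graphs carry unital multiplicative graph structures m : C2 → C1 and m' : C2' → C1'. If the directed kite with A = C = C1, B = C0, f = d, r = e, g = c, s = e, α = γ = f1, β = e'∘f0, and direction span (C1', d', c') is admissible, then m'∘(f1 ×_{f0} f1) = f1∘m, where f1 ×_{f0} f1 : C2 → C2' is the morphism induced on the pullbacks; in particular (f1 ×_{f0} f1, f1, f0) is a morphism of unital multiplicative graphs. -/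
open CategoryTheory

universe v u

theorem statement5 {C : Type u} [Category.{v} C] (hPb : HasPbSplit C)
    {C1 C0 C1' C0' : C} (d c : C1 ⟶ C0) (e : C0 ⟶ C1)
    (d' c' : C1' ⟶ C0') (e' : C0' ⟶ C1')
    (hed : e ≫ d = 𝟙 C0) (hec : e ≫ c = 𝟙 C0)
    (hed' : e' ≫ d' = 𝟙 C0') (hec' : e' ≫ c' = 𝟙 C0')
    (f1 : C1 ⟶ C1') (f0 : C0 ⟶ C0')
    (hfd : f1 ≫ d' = d ≫ f0) (hfc : f1 ≫ c' = c ≫ f0) (hfe : e ≫ f1 = f0 ≫ e')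
    {P P' : C} (π1 π2 : P ⟶ C1) (hP : IsPb π1 π2 d c)
    (π1' π2' : P' ⟶ C1') (hP' : IsPb π1' π2' d' c')
    (m : P ⟶ C1) (hmd : m ≫ d = π2 ≫ d) (hmc : m ≫ c = π1 ≫ c)
    (hu1 : ∀ l : C1 ⟶ P, l ≫ π1 = 𝟙 C1 → l ≫ π2 = d ≫ e → l ≫ m = 𝟙 C1)
    (hu2 : ∀ l : C1 ⟶ P, l ≫ π1 = c ≫ e → l ≫ π2 = 𝟙 C1 → l ≫ m = 𝟙 C1)
    (m' : P' ⟶ C1') (hmd' : m' ≫ d' = π2' ≫ d') (hmc' : m' ≫ c' = π1' ≫ c')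
    (hu1' : ∀ l : C1' ⟶ P', l ≫ π1' = 𝟙 C1' → l ≫ π2' = d' ≫ e' → l ≫ m' = 𝟙 C1')
    (hu2' : ∀ l : C1' ⟶ P', l ≫ π1' = c' ≫ e' → l ≫ π2' = 𝟙 C1' → l ≫ m' = 𝟙 C1')
    (hAdm : (DiKite.mk C1 C0 C1 C1' C0' C0' d e c e f1 (f0 ≫ e') f1 d' c').Admissible) :
    ∀ φ : P ⟶ P', φ ≫ π1' = π1 ≫ f1 → φ ≫ π2' = π2 ≫ f1 → φ ≫ m' = m ≫ f1 := by
  intro φ h1 h2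
  obtain ⟨m₀, _, huniq⟩ := hAdm π1 π2 hP
  have pbmono : ∀ {Z : C} (u v : Z ⟶ P'), u ≫ π1' = v ≫ π1' → u ≫ π2' = v ≫ π2' → u = v := by
    intro Z u v ha hb
    obtain ⟨l, -, hlu⟩ := hP'.univ (u ≫ π1') (u ≫ π2')
      (by rw [Category.assoc, Category.assoc, hP'.comm])
    exact (hlu u ⟨rfl, rfl⟩).trans (hlu v ⟨ha.symm, hb.symm⟩).symm
  have hm1 : IsMult (DiKite.mk C1 C0 C1 C1' C0' C0' d e c e f1 (f0 ≫ e') f1 d' c')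
      π1 π2 (m ≫ f1) := by
    refine ⟨?_, ?_, ?_, ?_⟩
    · intro e1 he1 he2
      have := hu1 e1 he1 he2
      show e1 ≫ m ≫ f1 = f1
      rw [← Category.assoc, this, Category.id_comp]
    · intro e2 he1 he2
      have := hu2 e2 he1 he2
      show e2 ≫ m ≫ f1 = f1
      rw [← Category.assoc, this, Category.id_comp]
    · show (m ≫ f1) ≫ d' = π2 ≫ f1 ≫ d'
      rw [Category.assoc, hfd, ← Category.assoc, hmd, Category.assoc]
    · show (m ≫ f1) ≫ c' = π1 ≫ f1 ≫ c'
      rw [Category.assoc, hfc, ← Category.assoc, hmc, Category.assoc]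
  have hm2 : IsMult (DiKite.mk C1 C0 C1 C1' C0' C0' d e c e f1 (f0 ≫ e') f1 d' c')
      π1 π2 (φ ≫ m') := by
    obtain ⟨l₁, ⟨hl11, hl12⟩, -⟩ := hP'.univ (𝟙 C1') (d' ≫ e')
      (by rw [Category.id_comp, Category.assoc, hec', Category.comp_id])
    obtain ⟨l₂, ⟨hl21, hl22⟩, -⟩ := hP'.univ (c' ≫ e') (𝟙 C1')
      (by rw [Category.id_comp, Category.assoc, hed', Category.comp_id])
    have hl1m : l₁ ≫ m' = 𝟙 C1' := hu1' l₁ hl11 hl12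
    have hl2m : l₂ ≫ m' = 𝟙 C1' := hu2' l₂ hl21 hl22
    refine ⟨?_, ?_, ?_, ?_⟩
    · intro e1 he1 he2
      have key : e1 ≫ φ = f1 ≫ l₁ := by
        apply pbmono
        · rw [Category.assoc, h1, ← Category.assoc, he1, Category.id_comp,
            Category.assoc, hl11, Category.comp_id]
        · rw [Category.assoc, h2, ← Category.assoc, he2, Category.assoc f1 l₁ π2', hl12]
          show (d ≫ e) ≫ f1 = f1 ≫ d' ≫ e'
          rw [Category.assoc, hfe, ← Category.assoc, ← hfd, Category.assoc]
      show e1 ≫ φ ≫ m' = f1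
      rw [← Category.assoc, key, Category.assoc, hl1m, Category.comp_id]
    · intro e2 he1 he2
      have key : e2 ≫ φ = f1 ≫ l₂ := by
        apply pbmono
        · rw [Category.assoc, h1, ← Category.assoc, he1, Category.assoc f1 l₂ π1', hl21]
          show (c ≫ e) ≫ f1 = f1 ≫ c' ≫ e'
          rw [Category.assoc, hfe, ← Category.assoc, ← hfc, Category.assoc]
        · rw [Category.assoc, h2, ← Category.assoc, he2, Category.id_comp,
            Category.assoc, hl22, Category.comp_id]
      show e2 ≫ φ ≫ m' = f1
      rw [← Category.assoc, key, Category.assoc, hl2m, Category.comp_id]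
    · show (φ ≫ m') ≫ d' = π2 ≫ f1 ≫ d'
      rw [Category.assoc, hmd', ← Category.assoc, h2, Category.assoc]
    · show (φ ≫ m') ≫ c' = π1 ≫ f1 ≫ c'
      rw [Category.assoc, hmc', ← Category.assoc, h1, Category.assoc]
  exact (huniq _ hm2).trans (huniq _ hm1).symm
end

section
/- Let C be a category with pullbacks of split epimorphisms along split epimorphisms. Let (h_A, h_B, h_C, h_D, h_0, h_1) be a morphism of directed kites from (f, r, g, s, α, β, γ, d, c) to (f', r', g', s', α', β', γ', d', c') (so h_B∘f = f'∘h_A, h_A∘r = r'∘h_B, h_B∘g = g'∘h_C, h_C∘s = s'∘h_B, h_D∘α = α'∘h_A, h_D∘β = β'∘h_B, h_D∘γ = γ'∘h_C, d'∘h_D = h_0∘d, c'∘h_D = h_1∘c). Suppose both dikites carry multiplications m : A×_B C → D and m' : A'×_{B'} C' → D', and suppose the mixed directed kite (f, r, g, s, h_D∘α, h_D∘β, h_D∘γ, d', c') admits a unique multiplication. Then h_D∘m = m'∘(h_A ×_{h_B} h_C), where h_A ×_{h_B} h_C : A×_B C → A'×_{B'} C' is the induced morphism between the pullbacks. -/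
open CategoryTheory

universe v u

theorem statement6 {C : Type u} [Category.{v} C] (hPb : HasPbSplit C)
    (K K' : DiKite C) (hK : K.IsKite) (hK' : K'.IsKite)
    (hA : K.A ⟶ K'.A) (hB : K.B ⟶ K'.B) (hC : K.Cc ⟶ K'.Cc)
    (hD : K.D ⟶ K'.D) (h0 : K.D0 ⟶ K'.D0) (h1 : K.D1 ⟶ K'.D1)
    (cf : K.f ≫ hB = hA ≫ K'.f) (cr : K.r ≫ hA = hB ≫ K'.r)
    (cg : K.g ≫ hB = hC ≫ K'.g) (cs : K.s ≫ hC = hB ≫ K'.s)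
    (cα : K.α ≫ hD = hA ≫ K'.α) (cβ : K.β ≫ hD = hB ≫ K'.β)
    (cγ : K.γ ≫ hD = hC ≫ K'.γ)
    (cd : hD ≫ K'.d = K.d ≫ h0) (cc : hD ≫ K'.c = K.c ≫ h1)
    {P P' : C} (π1 : P ⟶ K.A) (π2 : P ⟶ K.Cc) (hP : IsPb π1 π2 K.f K.g)
    (π1' : P' ⟶ K'.A) (π2' : P' ⟶ K'.Cc) (hP' : IsPb π1' π2' K'.f K'.g)
    (m : P ⟶ K.D) (hm : IsMult K π1 π2 m)
    (m' : P' ⟶ K'.D) (hm' : IsMult K' π1' π2' m')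
    (hmix : (DiKite.mk K.A K.B K.Cc K'.D K'.D0 K'.D1 K.f K.r K.g K.s
      (K.α ≫ hD) (K.β ≫ hD) (K.γ ≫ hD) K'.d K'.c).Admissible) :
    ∀ φ : P ⟶ P', φ ≫ π1' = π1 ≫ hA → φ ≫ π2' = π2 ≫ hC → m ≫ hD = φ ≫ m' := by
  intro φ hφ1 hφ2
  obtain ⟨m'', hm'', huniq⟩ := hmix π1 π2 hP
  -- joint monicity of (π1', π2')
  have jm : ∀ {Z : C} (u v : Z ⟶ P'), u ≫ π1' = v ≫ π1' → u ≫ π2' = v ≫ π2' → u = v := by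
    intro Z u v h1 h2
    obtain ⟨l, -, hu⟩ := hP'.univ (v ≫ π1') (v ≫ π2')
      (by rw [Category.assoc, Category.assoc, hP'.comm])
    rw [hu u ⟨h1, h2⟩, hu v ⟨rfl, rfl⟩]
  -- m ≫ hD is a multiplication for the mixed kite
  have H1 : IsMult (DiKite.mk K.A K.B K.Cc K'.D K'.D0 K'.D1 K.f K.r K.g K.s
      (K.α ≫ hD) (K.β ≫ hD) (K.γ ≫ hD) K'.d K'.c) π1 π2 (m ≫ hD) := by
    refine ⟨?_, ?_, ?_, ?_⟩
    · intro e1 he1 he2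
      rw [← Category.assoc, hm.1 e1 he1 he2]
    · intro e2 he1 he2
      rw [← Category.assoc, hm.2.1 e2 he1 he2]
    · show (m ≫ hD) ≫ K'.d = π2 ≫ (K.γ ≫ hD) ≫ K'.d
      rw [Category.assoc, cd, ← Category.assoc, hm.2.2.1]
      simp [cd]
    · show (m ≫ hD) ≫ K'.c = π1 ≫ (K.α ≫ hD) ≫ K'.c
      rw [Category.assoc, cc, ← Category.assoc, hm.2.2.2]
      simp [cc]
  -- the canonical sections of (π1', π2')
  obtain ⟨e1', ⟨he1'1, he1'2⟩, -⟩ := hP'.univ (𝟙 K'.A) (K'.f ≫ K'.s)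
    (by rw [Category.id_comp, Category.assoc, hK'.2.1, Category.comp_id])
  obtain ⟨e2', ⟨he2'1, he2'2⟩, -⟩ := hP'.univ (K'.g ≫ K'.r) (𝟙 K'.Cc)
    (by rw [Category.id_comp, Category.assoc, hK'.1, Category.comp_id])
  -- φ ≫ m' is a multiplication for the mixed kite
  have H2 : IsMult (DiKite.mk K.A K.B K.Cc K'.D K'.D0 K'.D1 K.f K.r K.g K.s
      (K.α ≫ hD) (K.β ≫ hD) (K.γ ≫ hD) K'.d K'.c) π1 π2 (φ ≫ m') := by
    refine ⟨?_, ?_, ?_, ?_⟩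
    · intro e1 he1 he2
      have key : e1 ≫ φ = hA ≫ e1' := by
        apply jm
        · rw [Category.assoc, hφ1, ← Category.assoc, he1, Category.id_comp,
            Category.assoc, he1'1, Category.comp_id]
        · calc (e1 ≫ φ) ≫ π2' = (e1 ≫ π2) ≫ hC := by rw [Category.assoc, hφ2, Category.assoc]
            _ = (K.f ≫ K.s) ≫ hC := by rw [he2]
            _ = K.f ≫ hB ≫ K'.s := by rw [Category.assoc, cs]
            _ = (hA ≫ K'.f) ≫ K'.s := by rw [← Category.assoc, cf]
            _ = (hA ≫ e1') ≫ π2' := by simp only [Category.assoc, he1'2]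
      show e1 ≫ φ ≫ m' = K.α ≫ hD
      rw [← Category.assoc, key, Category.assoc, hm'.1 e1' he1'1 he1'2, cα]
    · intro e2 he1 he2
      have key : e2 ≫ φ = hC ≫ e2' := by
        apply jm
        · calc (e2 ≫ φ) ≫ π1' = (e2 ≫ π1) ≫ hA := by rw [Category.assoc, hφ1, Category.assoc]
            _ = (K.g ≫ K.r) ≫ hA := by rw [he1]
            _ = K.g ≫ hB ≫ K'.r := by rw [Category.assoc, cr]
            _ = (hC ≫ K'.g) ≫ K'.r := by rw [← Category.assoc, cg]
            _ = (hC ≫ e2') ≫ π1' := by simp only [Category.assoc, he2'1]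
        · rw [Category.assoc, hφ2, ← Category.assoc, he2, Category.id_comp,
            Category.assoc, he2'2, Category.comp_id]
      show e2 ≫ φ ≫ m' = K.γ ≫ hD
      rw [← Category.assoc, key, Category.assoc, hm'.2.1 e2' he2'1 he2'2, cγ]
    · show (φ ≫ m') ≫ K'.d = π2 ≫ (K.γ ≫ hD) ≫ K'.d
      rw [Category.assoc, hm'.2.2.1, ← Category.assoc, hφ2]
      simp [cγ]
    · show (φ ≫ m') ≫ K'.c = π1 ≫ (K.α ≫ hD) ≫ K'.c
      rw [Category.assoc, hm'.2.2.2, ← Category.assoc, hφ1]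
      simp [cα]
  rw [huniq (m ≫ hD) H1, huniq (φ ≫ m') H2]
end

section
/- Let C be a category with pullbacks of split epimorphisms along split epimorphisms and with equalizers. If every directed kite in C whose direction span is jointly strongly monic is admissible, then C is weakly Mal'tsev, i.e. in every local product the pair (e1, e2) is jointly epic. -/
open CategoryTheory

universe v u

/-- The span `(D, d, c)` is jointly strongly monic. -/
def JointlyStronglyMonic {C : Type u} [Category.{v} C] {D D0 D1 : C}
    (d : D ⟶ D0) (c : D ⟶ D1) : Prop :=
  JointlyMonic d c ∧
  ∀ {X Y : C} (e : X ⟶ Y), Epi e → ∀ (u : X ⟶ D) (v0 : Y ⟶ D0) (v1 : Y ⟶ D1),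
    u ≫ d = e ≫ v0 → u ≫ c = e ≫ v1 →
    ∃ w : Y ⟶ D, e ≫ w = u ∧ w ≫ d = v0 ∧ w ≫ c = v1

/-- In every local product of `C`, the cospan `(e1, e2)` is jointly epic
(the defining property of a weakly Mal'tsev category). -/
def WMaltsevProp (C : Type u) [Category.{v} C] : Prop :=
  ∀ {A B Cc E : C} (f : A ⟶ B) (r : B ⟶ A) (g : Cc ⟶ B) (s : B ⟶ Cc)
    (p1 : E ⟶ A) (p2 : E ⟶ Cc) (e1 : A ⟶ E) (e2 : Cc ⟶ E),
    r ≫ f = 𝟙 B → s ≫ g = 𝟙 B → IsPb p1 p2 f g →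
    e1 ≫ p1 = 𝟙 A → e1 ≫ p2 = f ≫ s → e2 ≫ p1 = g ≫ r → e2 ≫ p2 = 𝟙 Cc →
    ∀ {Z : C} (u v : E ⟶ Z), e1 ≫ u = e1 ≫ v → e2 ≫ u = e2 ≫ v → u = v

/-- `C` has equalizers. -/
def HasEqs (C : Type u) [Category.{v} C] : Prop :=
  ∀ {X Y : C} (u v : X ⟶ Y), ∃ (E : C) (i : E ⟶ X), i ≫ u = i ≫ v ∧
    ∀ {Z : C} (h : Z ⟶ X), h ≫ u = h ≫ v → ∃! l : Z ⟶ E, l ≫ i = h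

/-- The span `(D, d, c)` is difunctional. -/
def Difunctional {C : Type u} [Category.{v} C] {D D0 D1 : C}
    (d : D ⟶ D0) (c : D ⟶ D1) : Prop :=
  ∀ {Z : C} (x y z : Z ⟶ D), x ≫ d = y ≫ d → y ≫ c = z ≫ c →
    ∃ w : Z ⟶ D, w ≫ d = z ≫ d ∧ w ≫ c = x ≫ c

theorem statement8 {C : Type u} [Category.{v} C]
    (hPb : HasPbSplit C) (hEq : HasEqs C)
    (hAdm : ∀ K : DiKite C, K.IsKite → JointlyStronglyMonic K.d K.c → K.Admissible) :
    WMaltsevProp C := by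
  intro A B Cc E f r g s p1 p2 e1 e2 hrf hsg hPB he1p1 he1p2 he2p1 he2p2 Z u v hu hv
  obtain ⟨Q, i, hi, hiuniv⟩ := hEq u v
  -- i is mono
  have imono : ∀ {W : C} (h1 h2 : W ⟶ Q), h1 ≫ i = h2 ≫ i → h1 = h2 := by
    intro W h1 h2 h
    obtain ⟨l, -, hluniq⟩ := hiuniv (h1 ≫ i)
      (by rw [Category.assoc, Category.assoc, hi])
    exact (hluniq h1 rfl).trans (hluniq h2 h.symm).symm
  -- (p1, p2) is jointly monic
  have jm : JointlyMonic p1 p2 := by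
    intro W x y h1 h2
    obtain ⟨l, -, hluniq⟩ := hPB.univ (x ≫ p1) (x ≫ p2)
      (by rw [Category.assoc, Category.assoc, hPB.comm])
    exact (hluniq x ⟨rfl, rfl⟩).trans (hluniq y ⟨h1.symm, h2.symm⟩).symm
  -- factor e1, e2 through the equalizer
  obtain ⟨a, ha, -⟩ := hiuniv e1 hu
  obtain ⟨cg, hcg, -⟩ := hiuniv e2 hv
  -- r ≫ e1 = s ≫ e2
  have hre : r ≫ e1 = s ≫ e2 := by
    apply jm
    · rw [Category.assoc, Category.assoc, he1p1, he2p1, Category.comp_id,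
        ← Category.assoc, hsg, Category.id_comp]
    · rw [Category.assoc, Category.assoc, he1p2, he2p2, Category.comp_id,
        ← Category.assoc, hrf, Category.id_comp]
  have hbeta : s ≫ cg = r ≫ a := by
    apply imono
    rw [Category.assoc, Category.assoc, ha, hcg, hre]
  -- the directed kite
  set K : DiKite C := ⟨A, B, Cc, Q, Cc, A, f, r, g, s, a, r ≫ a, cg, i ≫ p2, i ≫ p1⟩
    with hK
  have hKd : K.d = i ≫ p2 := rfl
  have hKc : K.c = i ≫ p1 := rfl
  have haip2 : a ≫ i ≫ p2 = f ≫ s := by rw [← Category.assoc, ha, he1p2]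
  have haip1 : a ≫ i ≫ p1 = 𝟙 A := by rw [← Category.assoc, ha, he1p1]
  have hgip2 : cg ≫ i ≫ p2 = 𝟙 Cc := by rw [← Category.assoc, hcg, he2p2]
  have hgip1 : cg ≫ i ≫ p1 = g ≫ r := by rw [← Category.assoc, hcg, he2p1]
  have hkite : K.IsKite := by
    refine ⟨hrf, hsg, rfl, hbeta, ?_, ?_⟩
    · show a ≫ (i ≫ p2) = f ≫ (r ≫ a) ≫ (i ≫ p2)
      simp only [Category.assoc]
      rw [haip2, ← Category.assoc r f s, hrf, Category.id_comp]
    · show g ≫ (r ≫ a) ≫ (i ≫ p1) = cg ≫ (i ≫ p1)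
      simp only [Category.assoc]
      rw [haip1, Category.comp_id, hgip1]
  have hjsm : JointlyStronglyMonic K.d K.c := by
    constructor
    · intro W x y h2 h1
      apply imono
      apply jm
      · simpa [hKc] using h1
      · simpa [hKd] using h2
    · intro X Y e he u' v0 v1 h0 h1
      rw [hKd] at h0; rw [hKc] at h1
      have hcomm : v1 ≫ f = v0 ≫ g := by
        apply he.left_cancellation
        calc e ≫ v1 ≫ f = (u' ≫ i ≫ p1) ≫ f := by rw [h1]; simp only [Category.assoc]
          _ = (u' ≫ i ≫ p2) ≫ g := by simp only [Category.assoc, hPB.comm]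
          _ = e ≫ v0 ≫ g := by rw [h0]; simp only [Category.assoc]
      obtain ⟨w', ⟨hw1, hw2⟩, -⟩ := hPB.univ v1 v0 hcomm
      have hew : e ≫ w' = u' ≫ i := by
        apply jm
        · simp only [Category.assoc, hw1, h1]
        · simp only [Category.assoc, hw2, h0]
      have hweq : w' ≫ u = w' ≫ v := by
        apply he.left_cancellation
        calc e ≫ w' ≫ u = (u' ≫ i) ≫ u := by rw [← Category.assoc, hew]
          _ = (u' ≫ i) ≫ v := by simp only [Category.assoc, hi]
          _ = e ≫ w' ≫ v := by rw [← hew, Category.assoc]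
      obtain ⟨w, hwi, -⟩ := hiuniv w' hweq
      refine ⟨w, ?_, ?_, ?_⟩
      · apply imono
        rw [Category.assoc, hwi, hew]
      · rw [hKd, ← Category.assoc, hwi, hw2]
      · rw [hKc, ← Category.assoc, hwi, hw1]
  obtain ⟨m, ⟨hm1, hm2, hmd, hmc⟩, -⟩ := hAdm K hkite hjsm p1 p2 hPB
  have hma : e1 ≫ m = a := hm1 e1 he1p1 he1p2
  have hmg : e2 ≫ m = cg := hm2 e2 he2p1 he2p2
  have hmi : m ≫ i = 𝟙 E := by
    apply jm
    · rw [Category.assoc, ← hKc, hmc, Category.id_comp]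
      show p1 ≫ a ≫ (i ≫ p1) = p1
      rw [← Category.assoc a, ha, he1p1, Category.comp_id]
    · rw [Category.assoc, ← hKd, hmd, Category.id_comp]
      show p2 ≫ cg ≫ (i ≫ p2) = p2
      rw [← Category.assoc cg, hcg, he2p2, Category.comp_id]
  calc u = (m ≫ i) ≫ u := by rw [hmi, Category.id_comp]
    _ = (m ≫ i) ≫ v := by rw [Category.assoc, Category.assoc, hi]
    _ = v := by rw [hmi, Category.id_comp]
end

section
/- Let C be a category with pullbacks of split epimorphisms along split epimorphisms and with equalizers. Then C is weakly Mal'tsev if and only if every jointly strongly monic span in C whose legs admit kernel pairs is difunctional. -/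
open CategoryTheory

universe v u

section AuxLemmas

variable {C : Type u} [Category.{v} C]

theorem IsPb.jm {P A B X : C} {p1 : P ⟶ A} {p2 : P ⟶ B} {f : A ⟶ X} {g : B ⟶ X}
    (h : IsPb p1 p2 f g) {Z : C} (u v : Z ⟶ P)
    (h1 : u ≫ p1 = v ≫ p1) (h2 : u ≫ p2 = v ≫ p2) : u = v := by
  obtain ⟨l, -, hu⟩ := h.univ (v ≫ p1) (v ≫ p2)
    (by rw [Category.assoc, Category.assoc, h.comm])
  rw [hu u ⟨h1, h2⟩, hu v ⟨rfl, rfl⟩]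

end AuxLemmas

theorem statement9 {C : Type u} [Category.{v} C]
    (hPb : HasPbSplit C) (hEq : HasEqs C) :
    WMaltsevProp C ↔
      ∀ {D D0 D1 : C} (d : D ⟶ D0) (c : D ⟶ D1),
        JointlyStronglyMonic d c → HasKernelPair d → HasKernelPair c →
        Difunctional d c := by
  constructor
  · -- Weakly Mal'tsev ⇒ strong spans with kernel pairs are difunctional
    intro hWM D D0 D1 d c hSM hKd hKc
    obtain ⟨Rd, k1, k2, hRd⟩ := hKd
    obtain ⟨Rc, l1, l2, hRc⟩ := hKc
    obtain ⟨dd, ⟨hdd1, hdd2⟩, -⟩ := hRd.univ (𝟙 D) (𝟙 D) rfl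
    obtain ⟨dc, ⟨hdc1, hdc2⟩, -⟩ := hRc.univ (𝟙 D) (𝟙 D) rfl
    -- the triple object T : pullback of k2 along l1
    obtain ⟨T, π1, π2, hT⟩ := hPb k2 dd l1 dc hdd2 hdc1
    obtain ⟨e1, ⟨he11, he12⟩, -⟩ := hT.univ (𝟙 Rd) (k2 ≫ dc)
      (by rw [Category.id_comp, Category.assoc, hdc1, Category.comp_id])
    obtain ⟨e2, ⟨he21, he22⟩, -⟩ := hT.univ (l1 ≫ dd) (𝟙 Rc)
      (by rw [Category.id_comp, Category.assoc, hdd2, Category.comp_id])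
    obtain ⟨δ, ⟨hδ1, hδ2⟩, -⟩ := hT.univ dd dc (by rw [hdd2, hdc1])
    have hcod : δ ≫ π2 ≫ l2 = 𝟙 D := by rw [← Category.assoc, hδ2, hdc2]
    -- V : pullback of k2 along cod = π2 ≫ l2
    obtain ⟨V, v1, v2, hV⟩ := hPb k2 dd (π2 ≫ l2) δ hdd2 hcod
    -- T' : equalizer
    obtain ⟨T', i, hieq, hiu⟩ := hEq (v1 ≫ k1 ≫ c) (v2 ≫ π1 ≫ k1 ≫ c)
    have hVc : ∀ {X : C} (k : D ⟶ X), v1 ≫ k2 ≫ k = v2 ≫ π2 ≫ l2 ≫ k := fun k => by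
      rw [← Category.assoc, hV.comm, Category.assoc, Category.assoc]
    have he11c : ∀ {X : C} (k : Rd ⟶ X), e1 ≫ π1 ≫ k = k := fun k => by
      rw [← Category.assoc, he11, Category.id_comp]
    have he21c : ∀ {X : C} (k : Rd ⟶ X), e2 ≫ π1 ≫ k = l1 ≫ dd ≫ k := fun k => by
      rw [← Category.assoc, he21, Category.assoc]
    have hdd1c : ∀ {X : C} (k : D ⟶ X), dd ≫ k1 ≫ k = k := fun k => by
      rw [← Category.assoc, hdd1, Category.id_comp]
    -- e1 factors through i ≫ v2
    obtain ⟨h1, ⟨hh11, hh12⟩, -⟩ := hV.univ (𝟙 Rd) e1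
      (by rw [Category.id_comp, ← Category.assoc, he12, Category.assoc, hdc2,
        Category.comp_id])
    have hh11c : ∀ {X : C} (k : Rd ⟶ X), h1 ≫ v1 ≫ k = k := fun k => by
      rw [← Category.assoc, hh11, Category.id_comp]
    have hh12c : ∀ {X : C} (k : T ⟶ X), h1 ≫ v2 ≫ k = e1 ≫ k := fun k => by
      rw [← Category.assoc, hh12]
    obtain ⟨f1, hf1, -⟩ := hiu h1 (by rw [hh11c, hh12c, he11c])
    have hf1j : f1 ≫ i ≫ v2 = e1 := by rw [← Category.assoc, hf1, hh12]
    -- e2 factors through i ≫ v2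
    obtain ⟨h2, ⟨hh21, hh22⟩, -⟩ := hV.univ (l2 ≫ dd) e2
      (by rw [Category.assoc, hdd2, Category.comp_id, ← Category.assoc, he22,
        Category.id_comp])
    have hh21c : ∀ {X : C} (k : Rd ⟶ X), h2 ≫ v1 ≫ k = l2 ≫ dd ≫ k := fun k => by
      rw [← Category.assoc, hh21, Category.assoc]
    have hh22c : ∀ {X : C} (k : T ⟶ X), h2 ≫ v2 ≫ k = e2 ≫ k := fun k => by
      rw [← Category.assoc, hh22]
    obtain ⟨f2, hf2, -⟩ := hiu h2
      (by rw [hh21c, hh22c, he21c, hdd1c, hRc.comm])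
    have hf2j : f2 ≫ i ≫ v2 = e2 := by rw [← Category.assoc, hf2, hh22]
    -- i ≫ v2 is an epimorphism
    have hepi : Epi (i ≫ v2) := by
      refine ⟨fun {Z} α β h => ?_⟩
      refine hWM k2 dd l1 dc π1 π2 e1 e2 hdd2 hdc1 hT he11 he12 he21 he22 α β ?_ ?_
      · rw [← hf1j, Category.assoc, h, ← Category.assoc]
      · rw [← hf2j, Category.assoc, h, ← Category.assoc]
    -- the strong filler
    obtain ⟨w, hjw, hwd, hwc⟩ := hSM.2 (i ≫ v2) hepi (i ≫ v1 ≫ k1)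
      ((π2 ≫ l2) ≫ d) ((π1 ≫ k1) ≫ c)
      (by
        simp only [Category.assoc]
        rw [hRd.comm, hVc])
      (by
        simp only [Category.assoc] at hieq ⊢
        exact hieq)
    intro Z x y z hxy hyz
    obtain ⟨txy, ⟨htxy1, htxy2⟩, -⟩ := hRd.univ x y hxy
    obtain ⟨tyz, ⟨htyz1, htyz2⟩, -⟩ := hRc.univ y z hyz
    obtain ⟨t, ⟨ht1, ht2⟩, -⟩ := hT.univ txy tyz (by rw [htxy2, htyz1])
    refine ⟨t ≫ w, ?_, ?_⟩
    · rw [Category.assoc, hwd, ← Category.assoc, ← Category.assoc, ht2, htyz2]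
    · rw [Category.assoc, hwc, ← Category.assoc, ← Category.assoc, ht1, htxy1]
  · -- difunctionality of strong spans ⇒ weakly Mal'tsev
    intro hDif A B Cc E f r g s p1 p2 e1 e2 hr hs hPbE he1p1 he1p2 he2p1 he2p2
      Z u v hu1 hu2
    obtain ⟨Q, i, hi, hiu⟩ := hEq u v
    obtain ⟨a1, ha1, -⟩ := hiu e1 hu1
    obtain ⟨a2, ha2, -⟩ := hiu e2 hu2
    have imono : ∀ {Y : C} (α β : Y ⟶ Q), α ≫ i = β ≫ i → α = β := by
      intro Y α β h
      obtain ⟨l, -, hl⟩ := hiu (β ≫ i) (by rw [Category.assoc, Category.assoc, hi])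
      rw [hl α h, hl β rfl]
    have ha1c : ∀ {X : C} (k : E ⟶ X), a1 ≫ i ≫ k = e1 ≫ k := fun k => by
      rw [← Category.assoc, ha1]
    have ha2c : ∀ {X : C} (k : E ⟶ X), a2 ≫ i ≫ k = e2 ≫ k := fun k => by
      rw [← Category.assoc, ha2]
    have hsm : JointlyStronglyMonic (i ≫ p1) (i ≫ p2) := by
      constructor
      · intro Y α β hp1 hp2
        refine imono α β (hPbE.jm (α ≫ i) (β ≫ i) ?_ ?_)
        · rw [Category.assoc, Category.assoc]; exact hp1
        · rw [Category.assoc, Category.assoc]; exact hp2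
      · intro X Y e he u' v0 v1 h1 h2
        have hv : v0 ≫ f = v1 ≫ g := by
          have he' : e ≫ v0 ≫ f = e ≫ v1 ≫ g := by
            rw [← Category.assoc, ← h1, ← Category.assoc e v1 g, ← h2,
              Category.assoc, Category.assoc, Category.assoc, Category.assoc,
              hPbE.comm]
          exact (cancel_epi e).1 he'
        obtain ⟨w0, ⟨hw01, hw02⟩, -⟩ := hPbE.univ v0 v1 hv
        have hew : e ≫ w0 = u' ≫ i := by
          refine hPbE.jm _ _ ?_ ?_
          · rw [Category.assoc, hw01, Category.assoc, ← h1, ← Category.assoc]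
          · rw [Category.assoc, hw02, Category.assoc, ← h2, ← Category.assoc]
        obtain ⟨t, ht, -⟩ := hiu w0 ((cancel_epi e).1 (by
          rw [← Category.assoc, hew, ← Category.assoc e w0 v, hew,
            Category.assoc, Category.assoc, hi]))
        refine ⟨t, imono _ _ ?_, ?_, ?_⟩
        · rw [Category.assoc, ht, hew]
        · rw [← Category.assoc, ht, hw01]
        · rw [← Category.assoc, ht, hw02]
    have hkd : HasKernelPair (i ≫ p1) := by
      have hsec : a1 ≫ i ≫ p1 = 𝟙 A := by rw [ha1c, he1p1]
      obtain ⟨K, q1, q2, hK⟩ := hPb (i ≫ p1) a1 (i ≫ p1) a1 hsec hsec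
      exact ⟨K, q1, q2, hK⟩
    have hkc : HasKernelPair (i ≫ p2) := by
      have hsec : a2 ≫ i ≫ p2 = 𝟙 Cc := by rw [ha2c, he2p2]
      obtain ⟨K, q1, q2, hK⟩ := hPb (i ≫ p2) a2 (i ≫ p2) a2 hsec hsec
      exact ⟨K, q1, q2, hK⟩
    obtain ⟨w, hwd, hwc⟩ := hDif (i ≫ p1) (i ≫ p2) hsm hkd hkc
      (p2 ≫ a2) (p1 ≫ f ≫ r ≫ a1) (p1 ≫ a1)
      (by
        simp only [Category.assoc]
        rw [ha2c, ha1c, he2p1, he1p1, Category.comp_id, ← Category.assoc p2 g r,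
          ← Category.assoc p1 f r, hPbE.comm])
      (by
        simp only [Category.assoc]
        rw [ha1c, he1p2, ← Category.assoc r f s, hr, Category.id_comp])
    have hz : (p1 ≫ a1) ≫ i ≫ p1 = p1 := by
      rw [Category.assoc, ha1c, he1p1, Category.comp_id]
    have hx : (p2 ≫ a2) ≫ i ≫ p2 = p2 := by
      rw [Category.assoc, ha2c, he2p2, Category.comp_id]
    have hwi : w ≫ i = 𝟙 E := by
      refine hPbE.jm _ _ ?_ ?_
      · rw [Category.assoc, hwd, hz, Category.id_comp]
      · rw [Category.assoc, hwc, hx, Category.id_comp]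
    calc u = (w ≫ i) ≫ u := by rw [hwi, Category.id_comp]
    _ = (w ≫ i) ≫ v := by rw [Category.assoc, hi, Category.assoc]
    _ = v := by rw [hwi, Category.id_comp]
end

section
/- Let C be a category with pullbacks of split epimorphisms along split epimorphisms and with equalizers. Then C is weakly Mal'tsev if and only if every reflexive jointly strongly monic relation in C is an equivalence relation. -/
open CategoryTheory

universe v u

section Proofs

variable {C : Type u} [Category.{v} C]

lemma jm_of_isPb {P A B X : C} {p1 : P ⟶ A} {p2 : P ⟶ B} {f : A ⟶ X} {g : B ⟶ X}
    (h : IsPb p1 p2 f g) : JointlyMonic p1 p2 := by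
  intro Z uu vv h1 h2
  obtain ⟨l, _, hu⟩ := h.univ (uu ≫ p1) (uu ≫ p2)
    (by rw [Category.assoc, Category.assoc, h.comm])
  rw [hu uu ⟨rfl, rfl⟩, hu vv ⟨h1.symm, h2.symm⟩]

lemma difunct_of_wm (hPb : HasPbSplit C) (hEq : HasEqs C) (hWM : WMaltsevProp C)
    {X D : C} (d c : D ⟶ X) (e : X ⟶ D) (hS : JointlyStronglyMonic d c)
    (hed : e ≫ d = 𝟙 X) (hec : e ≫ c = 𝟙 X) : Difunctional d c := by
  obtain ⟨hJM, hLift⟩ := hS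
  -- kernel pairs of d and c
  obtain ⟨K, k1, k2, hK⟩ := hPb d e d e hed hed
  obtain ⟨K', k1', k2', hK'⟩ := hPb c e c e hec hec
  obtain ⟨δ, ⟨hδ1, hδ2⟩, -⟩ := hK.univ (𝟙 D) (𝟙 D) rfl
  obtain ⟨δ', ⟨hδ'1, hδ'2⟩, -⟩ := hK'.univ (𝟙 D) (𝟙 D) rfl
  -- the triple object P as a local product
  obtain ⟨P, π1, π2, hP⟩ := hPb k2 δ k1' δ' hδ2 hδ'1
  obtain ⟨e1P, ⟨he11, he12⟩, -⟩ := hP.univ (𝟙 K) (k2 ≫ δ')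
    (by rw [Category.id_comp, Category.assoc, hδ'1, Category.comp_id])
  obtain ⟨e2P, ⟨he21, he22⟩, -⟩ := hP.univ (k1' ≫ δ) (𝟙 K')
    (by rw [Category.id_comp, Category.assoc, hδ2, Category.comp_id])
  -- target legs
  have hsplit : (e ≫ δ ≫ e1P) ≫ (π2 ≫ k2' ≫ d) = 𝟙 X := by
    rw [Category.assoc, Category.assoc]
    rw [reassoc_of% he12, reassoc_of% hδ2, reassoc_of% hδ'2, hed]
  obtain ⟨Q1, a, b, hQ1⟩ := hPb (π2 ≫ k2' ≫ d) (e ≫ δ ≫ e1P) d e hsplit hed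
  obtain ⟨Q, iQ, hiQ, hQuniv⟩ := hEq (b ≫ c) (a ≫ (π1 ≫ k1 ≫ c))
  -- factor e1P through Q
  obtain ⟨g1, ⟨hg1a, hg1b⟩, -⟩ := hQ1.univ e1P k1
    (by rw [reassoc_of% he12, reassoc_of% hδ'2, hK.comm])
  obtain ⟨j1, hj1, -⟩ := hQuniv g1
    (by rw [← Category.assoc, ← Category.assoc, hg1b, hg1a, reassoc_of% he11])
  obtain ⟨g2, ⟨hg2a, hg2b⟩, -⟩ := hQ1.univ e2P k2'
    (by rw [reassoc_of% he22])
  obtain ⟨j2, hj2, -⟩ := hQuniv g2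
    (by rw [← Category.assoc, ← Category.assoc, hg2b, hg2a, reassoc_of% he21,
      reassoc_of% hδ1, hK'.comm])
  -- iQ ≫ a is epi
  have hq1 : j1 ≫ iQ ≫ a = e1P := by rw [← Category.assoc, hj1, hg1a]
  have hq2 : j2 ≫ iQ ≫ a = e2P := by rw [← Category.assoc, hj2, hg2a]
  have hepi : Epi (iQ ≫ a) := by
    refine ⟨fun {W} α β h => ?_⟩
    refine hWM k2 δ k1' δ' π1 π2 e1P e2P hδ2 hδ'1 hP he11 he12 he21 he22 α β ?_ ?_
    · rw [← hq1, Category.assoc, h, ← Category.assoc, hq1]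
    · rw [← hq2, Category.assoc, h, ← Category.assoc, hq2]
  -- the strong lifting
  obtain ⟨w, hwq, hwd, hwc⟩ := hLift (iQ ≫ a) hepi (iQ ≫ b)
    (π2 ≫ k2' ≫ d) (π1 ≫ k1 ≫ c)
    (by rw [Category.assoc, ← hQ1.comm, Category.assoc])
    (by rw [Category.assoc, hiQ, Category.assoc])
  -- difunctionality
  intro Z x y z hxy hyz
  obtain ⟨κ, ⟨hκ1, hκ2⟩, -⟩ := hK.univ x y hxy
  obtain ⟨κ', ⟨hκ'1, hκ'2⟩, -⟩ := hK'.univ y z hyz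
  obtain ⟨hh, ⟨hh1, hh2⟩, -⟩ := hP.univ κ κ' (by rw [hκ2, hκ'1])
  refine ⟨hh ≫ w, ?_, ?_⟩
  · rw [Category.assoc, hwd, reassoc_of% hh2, reassoc_of% hκ'2]
  · rw [Category.assoc, hwc, reassoc_of% hh1, reassoc_of% hκ1]

end Proofs

theorem statement10 {C : Type u} [Category.{v} C]
    (hPb : HasPbSplit C) (hEq : HasEqs C) :
    WMaltsevProp C ↔
      ∀ {X D : C} (d c : D ⟶ X) (e : X ⟶ D),
        JointlyStronglyMonic d c → e ≫ d = 𝟙 X → e ≫ c = 𝟙 X →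
        (∃ σ : D ⟶ D, σ ≫ d = c ∧ σ ≫ c = d) ∧
        (∀ {Z : C} (x y : Z ⟶ D), x ≫ c = y ≫ d →
          ∃ t : Z ⟶ D, t ≫ d = x ≫ d ∧ t ≫ c = y ≫ c) := by
  constructor
  · -- weakly Mal'tsev implies every strong reflexive relation is an equivalence relation
    intro hWM X D d c e hS hed hec
    have hdif : Difunctional d c := difunct_of_wm hPb hEq hWM d c e hS hed hec
    constructor
    · obtain ⟨σ, hσd, hσc⟩ := hdif (d ≫ e) (𝟙 D) (c ≫ e)
        (by rw [Category.assoc, hed, Category.comp_id, Category.id_comp])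
        (by rw [Category.id_comp, Category.assoc, hec, Category.comp_id])
      exact ⟨σ, by rw [hσd, Category.assoc, hed, Category.comp_id],
        by rw [hσc, Category.assoc, hec, Category.comp_id]⟩
    · intro Z x y hxy
      obtain ⟨t, htd, htc⟩ := hdif y (x ≫ c ≫ e) x
        (by rw [Category.assoc, Category.assoc, hed, Category.comp_id]; exact hxy.symm)
        (by rw [Category.assoc, Category.assoc, hec, Category.comp_id])
      exact ⟨t, htd, htc⟩
  · -- the converse
    intro H
    intro A B Cc E f r g s p1 p2 e1 e2 hrf hsg hpbE h11 h12 h21 h22 Z u v hu1 hu2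
    obtain ⟨M, i, hiuv, hMuniv⟩ := hEq u v
    have himono : ∀ {Z' : C} (a b : Z' ⟶ M), a ≫ i = b ≫ i → a = b := by
      intro Z' a b hab
      obtain ⟨l, hl, hluniq⟩ := hMuniv (a ≫ i)
        (by rw [Category.assoc, hiuv, Category.assoc])
      rw [hluniq a rfl, hluniq b hab.symm]
    obtain ⟨l1, hl1, -⟩ := hMuniv e1 hu1
    obtain ⟨l2, hl2, -⟩ := hMuniv e2 hu2
    have hl1d : l1 ≫ (i ≫ p1) = 𝟙 A := by
      rw [reassoc_of% hl1, h11]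
    have hl2c : l2 ≫ (i ≫ p2) = 𝟙 Cc := by
      rw [reassoc_of% hl2, h22]
    have hjmE : JointlyMonic p1 p2 := jm_of_isPb hpbE
    have hjm' : JointlyMonic (i ≫ p1) (i ≫ p2) := by
      intro Z' aa bb ha hb
      refine himono aa bb (hjmE (aa ≫ i) (bb ≫ i) ?_ ?_)
      · (try simp only [Category.assoc]); exact ha
      · (try simp only [Category.assoc]); exact hb
    -- the span (M, i ≫ p1, i ≫ p2) is jointly strongly monic
    have hstr' : ∀ {Xq Yq : C} (ε : Xq ⟶ Yq), Epi ε →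
        ∀ (uu : Xq ⟶ M) (v0 : Yq ⟶ A) (v1 : Yq ⟶ Cc),
        uu ≫ (i ≫ p1) = ε ≫ v0 → uu ≫ (i ≫ p2) = ε ≫ v1 →
        ∃ w : Yq ⟶ M, ε ≫ w = uu ∧ w ≫ (i ≫ p1) = v0 ∧ w ≫ (i ≫ p2) = v1 := by
      intro Xq Yq ε hε uu v0 v1 hv0 hv1
      have hfg : v0 ≫ f = v1 ≫ g := by
        apply hε.left_cancellation
        rw [← reassoc_of% hv0, ← reassoc_of% hv1]
        try simp only [Category.assoc]
        rw [hpbE.comm]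
      obtain ⟨l, ⟨hla, hlb⟩, -⟩ := hpbE.univ v0 v1 hfg
      have hεl : ε ≫ l = uu ≫ i := by
        apply hjmE
        · (try simp only [Category.assoc]); rw [hla]
          have := hv0; (try simp only [Category.assoc] at this); exact this.symm
        · (try simp only [Category.assoc]); rw [hlb]
          have := hv1; (try simp only [Category.assoc] at this); exact this.symm
      have hluv : l ≫ u = l ≫ v := by
        apply hε.left_cancellation
        rw [← Category.assoc, hεl, ← Category.assoc, hεl,
          Category.assoc, hiuv, Category.assoc]
      obtain ⟨w, hw, -⟩ := hMuniv l hluv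
      refine ⟨w, himono _ _ ?_, ?_, ?_⟩
      · rw [Category.assoc, hw, hεl]
      · rw [← Category.assoc, hw]; exact hla
      · rw [← Category.assoc, hw]; exact hlb
    -- the relation of triples on M
    obtain ⟨Kd, κ1, κ2, hKd⟩ := hPb (i ≫ p1) l1 (i ≫ p1) l1 hl1d hl1d
    obtain ⟨δd, ⟨hδd1, hδd2⟩, -⟩ := hKd.univ (𝟙 M) (𝟙 M) rfl
    have hsec : (l2 ≫ δd) ≫ (κ2 ≫ i ≫ p2) = 𝟙 Cc := by
      (try simp only [Category.assoc]); rw [reassoc_of% hδd2]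
      have := hl2c; (try simp only [Category.assoc] at this); exact this
    obtain ⟨T, τ1, τ2, hT⟩ := hPb (κ2 ≫ i ≫ p2) (l2 ≫ δd) (i ≫ p2) l2 hsec hl2c
    obtain ⟨eT, ⟨heT1, heT2⟩, -⟩ := hT.univ δd (𝟙 M)
      (by rw [reassoc_of% hδd2, Category.id_comp])
    have hjmKd : JointlyMonic κ1 κ2 := jm_of_isPb hKd
    have hjmT : JointlyMonic τ1 τ2 := jm_of_isPb hT
    have hKc : κ2 ≫ i ≫ p1 = κ1 ≫ i ≫ p1 := by
      have := hKd.comm; (try simp only [Category.assoc] at this ⊢); exact this.symm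
    have hTc : τ1 ≫ κ2 ≫ i ≫ p2 = τ2 ≫ i ≫ p2 := by
      have := hT.comm; (try simp only [Category.assoc] at this ⊢); exact this
    -- the triple relation is jointly monic
    have hjmTdc : JointlyMonic (τ1 ≫ κ1) τ2 := by
      intro Z' aa bb ha bbh
      have ha' : aa ≫ τ1 ≫ κ1 = bb ≫ τ1 ≫ κ1 := by
        exact ha
      have hκ2eq : aa ≫ τ1 ≫ κ2 = bb ≫ τ1 ≫ κ2 := by
        refine hjm' (aa ≫ τ1 ≫ κ2) (bb ≫ τ1 ≫ κ2) ?_ ?_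
        · (try simp only [Category.assoc]); rw [hKc, reassoc_of% ha']
        · try simp only [Category.assoc]
          rw [hTc, reassoc_of% bbh]
      have hτ1 : aa ≫ τ1 = bb ≫ τ1 := by
        refine hjmKd (aa ≫ τ1) (bb ≫ τ1) ?_ ?_
        · (try simp only [Category.assoc]); exact ha'
        · (try simp only [Category.assoc]); exact hκ2eq
      exact hjmT aa bb hτ1 bbh
    -- the triple relation is jointly strongly monic
    have hstrT : ∀ {Xq Yq : C} (ε : Xq ⟶ Yq), Epi ε →
        ∀ (uP : Xq ⟶ T) (w0 : Yq ⟶ M) (w1 : Yq ⟶ M),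
        uP ≫ (τ1 ≫ κ1) = ε ≫ w0 → uP ≫ τ2 = ε ≫ w1 →
        ∃ wY : Yq ⟶ T, ε ≫ wY = uP ∧ wY ≫ (τ1 ≫ κ1) = w0 ∧ wY ≫ τ2 = w1 := by
      intro Xq Yq ε hε uP w0 w1 hw0 hw1
      have hw0' : uP ≫ τ1 ≫ κ1 = ε ≫ w0 := by
        (try simp only [Category.assoc] at hw0); exact hw0
      obtain ⟨μ, hμε, hμd, hμc⟩ := hstr' ε hε (uP ≫ τ1 ≫ κ2) (w0 ≫ i ≫ p1) (w1 ≫ i ≫ p2)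
        (by (try simp only [Category.assoc]); rw [hKc, reassoc_of% hw0'])
        (by (try simp only [Category.assoc]); rw [hTc, reassoc_of% hw1])
      obtain ⟨k, ⟨hk1, hk2⟩, -⟩ := hKd.univ w0 μ
        (by rw [hμd])
      obtain ⟨wY, ⟨hwY1, hwY2⟩, -⟩ := hT.univ k w1
        (by rw [reassoc_of% hk2]
            have := hμc; (try simp only [Category.assoc] at this ⊢); exact this)
      have hτeq : ε ≫ wY ≫ τ1 = uP ≫ τ1 := by
        refine hjmKd (ε ≫ wY ≫ τ1) (uP ≫ τ1) ?_ ?_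
        · (try simp only [Category.assoc]); rw [reassoc_of% hwY1, hk1]
          exact hw0'.symm
        · (try simp only [Category.assoc]); rw [reassoc_of% hwY1, hk2]
          exact hμε
      refine ⟨wY, ?_, ?_, ?_⟩
      · refine hjmT (ε ≫ wY) uP ?_ ?_
        · (try simp only [Category.assoc]); exact hτeq
        · rw [Category.assoc, hwY2]; exact hw1.symm
      · rw [← Category.assoc, hwY1]; exact hk1
      · exact hwY2
    -- apply the hypothesis to get transitivity
    have heTd : eT ≫ (τ1 ≫ κ1) = 𝟙 M := by
      rw [← Category.assoc, heT1, hδd1]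
    obtain ⟨-, htrans⟩ := H (τ1 ≫ κ1) τ2 eT ⟨hjmTdc, hstrT⟩ heTd heT2
    -- the elements x ~ y and y ~ z of the triple relation
    obtain ⟨ka, ⟨hka1, hka2⟩, -⟩ := hKd.univ (p1 ≫ l1) (p1 ≫ l1) rfl
    obtain ⟨a', ⟨ha'1, ha'2⟩, -⟩ := hT.univ ka (p1 ≫ f ≫ r ≫ l1)
      (by try simp only [Category.assoc]
          rw [reassoc_of% hka2, reassoc_of% hl1, h12, reassoc_of% hrf])
    obtain ⟨kb, ⟨hkb1, hkb2⟩, -⟩ := hKd.univ (p1 ≫ f ≫ r ≫ l1) (p2 ≫ l2)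
      (by try simp only [Category.assoc]
          rw [reassoc_of% hl1, h11, Category.comp_id, reassoc_of% hl2, h21,
            ← reassoc_of% hpbE.comm])
    obtain ⟨b', ⟨hb'1, hb'2⟩, -⟩ := hT.univ kb (p2 ≫ l2)
      (by (try simp only [Category.assoc]); rw [reassoc_of% hkb2])
    obtain ⟨t, htd, htc⟩ := htrans a' b'
      (by rw [ha'2, ← Category.assoc b' τ1 κ1, hb'1, hkb1])
    -- the composite m ≫ i is the identity on E
    have htd' : t ≫ τ1 ≫ κ1 = a' ≫ τ1 ≫ κ1 := by
      exact htd
    have hmd : ((t ≫ τ1 ≫ κ2) ≫ i) ≫ p1 = p1 := by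
      try simp only [Category.assoc]
      rw [hKc, reassoc_of% htd', reassoc_of% ha'1, reassoc_of% hka1,
        reassoc_of% hl1, h11, Category.comp_id]
    have hmc : ((t ≫ τ1 ≫ κ2) ≫ i) ≫ p2 = p2 := by
      try simp only [Category.assoc]
      rw [hTc, reassoc_of% htc, reassoc_of% hb'2, reassoc_of% hl2, h22, Category.comp_id]
    obtain ⟨l, -, hluniq⟩ := hpbE.univ p1 p2 hpbE.comm
    have h1 := hluniq ((t ≫ τ1 ≫ κ2) ≫ i) ⟨hmd, hmc⟩
    have h2 := hluniq (𝟙 E) ⟨Category.id_comp _, Category.id_comp _⟩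
    have hid : (t ≫ τ1 ≫ κ2) ≫ i = 𝟙 E := by rw [h1, h2]
    calc u = 𝟙 E ≫ u := (Category.id_comp u).symm
      _ = ((t ≫ τ1 ≫ κ2) ≫ i) ≫ u := by rw [hid]
      _ = (t ≫ τ1 ≫ κ2) ≫ i ≫ u := Category.assoc _ _ _
      _ = (t ≫ τ1 ≫ κ2) ≫ i ≫ v := by rw [hiuv]
      _ = ((t ≫ τ1 ≫ κ2) ≫ i) ≫ v := (Category.assoc _ _ _).symm
      _ = 𝟙 E ≫ v := by rw [hid]
      _ = v := Category.id_comp v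
end

section
/- Let C be a category with pullbacks of split epimorphisms along split epimorphisms. Then C is Mal'tsev (every reflexive relation in C is symmetric) if and only if every reflexive relation in C is an equivalence relation. -/
open CategoryTheory

universe v u

/-- Every reflexive relation in `C` is symmetric
(the defining property of a Mal'tsev category). -/
def MaltsevProp (C : Type u) [Category.{v} C] : Prop :=
  ∀ {X D : C} (d c : D ⟶ X) (e : X ⟶ D), JointlyMonic d c →
    e ≫ d = 𝟙 X → e ≫ c = 𝟙 X → ∃ σ : D ⟶ D, σ ≫ d = c ∧ σ ≫ c = d

theorem statement11 {C : Type u} [Category.{v} C] (hPb : HasPbSplit C) :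
    MaltsevProp C ↔
      ∀ {X D : C} (d c : D ⟶ X) (e : X ⟶ D), JointlyMonic d c →
        e ≫ d = 𝟙 X → e ≫ c = 𝟙 X →
        (∃ σ : D ⟶ D, σ ≫ d = c ∧ σ ≫ c = d) ∧
        (∀ {Z : C} (x y : Z ⟶ D), x ≫ c = y ≫ d →
          ∃ t : Z ⟶ D, t ≫ d = x ≫ d ∧ t ≫ c = y ≫ c) := by
  constructor
  · intro hM X D d c e hjm hed hec
    refine ⟨hM d c e hjm hed hec, ?_⟩
    obtain ⟨K, k1, k2, hK⟩ := hPb d e d e hed hed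
    obtain ⟨Δ, ⟨hΔ1, hΔ2⟩, -⟩ := hK.univ (𝟙 D) (𝟙 D) rfl
    have hsec : (e ≫ Δ) ≫ (k2 ≫ c) = 𝟙 X := by
      rw [Category.assoc, ← Category.assoc Δ k2 c, hΔ2, Category.id_comp, hec]
    obtain ⟨T, t1, t2, hT⟩ := hPb (k2 ≫ c) (e ≫ Δ) c e hsec hec
    have jmT : JointlyMonic (t1 ≫ k1) t2 := by
      intro Z a b h1 h2
      have hw : a ≫ t1 ≫ k2 = b ≫ t1 ≫ k2 := by
        apply hjm
        · have hd := congrArg (· ≫ d) h1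
          simp only [Category.assoc] at hd ⊢
          rw [← hK.comm]
          exact hd
        · have hc := congrArg (· ≫ c) h2
          simp only [Category.assoc] at hc ⊢
          rw [hT.comm]
          exact hc
      have ht1 : a ≫ t1 = b ≫ t1 := by
        obtain ⟨l, -, hu⟩ := hK.univ (a ≫ t1 ≫ k1) (a ≫ t1 ≫ k2)
          (by simp only [Category.assoc]; rw [hK.comm])
        have e1 := hu (a ≫ t1) ⟨by simp only [Category.assoc], by simp only [Category.assoc]⟩
        have e2 := hu (b ≫ t1)
          ⟨by simp only [Category.assoc]; exact h1.symm,
           by simp only [Category.assoc]; exact hw.symm⟩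
        rw [e1, e2]
      obtain ⟨l, -, hu⟩ := hT.univ (a ≫ t1) (a ≫ t2)
        (by simp only [Category.assoc]; rw [hT.comm])
      have e1 := hu a ⟨rfl, rfl⟩
      have e2 := hu b ⟨ht1.symm, h2.symm⟩
      rw [e1, e2]
    obtain ⟨ε, ⟨hε1, hε2⟩, -⟩ := hT.univ Δ (𝟙 D)
      (by rw [← Category.assoc, hΔ2])
    have hεq1 : ε ≫ (t1 ≫ k1) = 𝟙 D := by rw [← Category.assoc, hε1, hΔ1]
    obtain ⟨σ, hσ1, hσ2⟩ := hM (t1 ≫ k1) t2 ε jmT hεq1 hε2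
    intro Z x y hxy
    obtain ⟨l, ⟨hl1, hl2⟩, -⟩ := hK.univ y (x ≫ c ≫ e)
      (by simp only [Category.assoc]; rw [hed, Category.comp_id, hxy])
    obtain ⟨p, ⟨hp1, hp2⟩, -⟩ := hT.univ l x
      (by rw [← Category.assoc, hl2]; simp only [Category.assoc]; rw [hec, Category.comp_id])
    refine ⟨p ≫ σ ≫ t1 ≫ k2, ?_, ?_⟩
    · have h1 := congrArg (fun t => p ≫ t ≫ d) hσ1
      simp only [Category.assoc] at h1 ⊢
      rw [← hK.comm, h1, ← Category.assoc, hp2]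
    · have h2 := congrArg (fun t => p ≫ t ≫ c) hσ2
      simp only [Category.assoc] at h2 ⊢
      rw [hT.comm, h2, ← Category.assoc, ← Category.assoc, hp1, hl1]
  · intro h X D d c e hjm h1 h2
    exact (h d c e hjm h1 h2).1
end

section
/- Let C be a category with pullbacks of split epimorphisms along split epimorphisms. Then C is Mal'tsev (every reflexive relation in C is symmetric) if and only if every jointly monic span in C whose legs admit kernel pairs is difunctional. -/
open CategoryTheory

universe v u

/-- Pullback projections are jointly monic. -/
lemma isPb_jointlyMonic {C : Type u} [Category.{v} C] {P A B X : C}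
    {p1 : P ⟶ A} {p2 : P ⟶ B} {f : A ⟶ X} {g : B ⟶ X}
    (h : IsPb p1 p2 f g) : JointlyMonic p1 p2 := by
  intro Z u v h1 h2
  obtain ⟨l, -, hu⟩ := h.univ (u ≫ p1) (u ≫ p2)
    (by rw [Category.assoc, Category.assoc, h.comm])
  rw [hu u ⟨rfl, rfl⟩, hu v ⟨h1.symm, h2.symm⟩]

theorem statement12 {C : Type u} [Category.{v} C] (hPb : HasPbSplit C) :
    MaltsevProp C ↔
      ∀ {D D0 D1 : C} (d : D ⟶ D0) (c : D ⟶ D1), JointlyMonic d c →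
        HasKernelPair d → HasKernelPair c → Difunctional d c := by
  constructor
  · intro hM D D0 D1 d c hjm hkd hkc
    obtain ⟨Kd, k1, k2, hKd⟩ := hkd
    obtain ⟨Kc, l1, l2, hKc⟩ := hkc
    -- diagonals splitting the kernel pair projections
    obtain ⟨ed, ⟨hed1, hed2⟩, -⟩ := hKd.univ (𝟙 D) (𝟙 D) rfl
    obtain ⟨ec, ⟨hec1, hec2⟩, -⟩ := hKc.univ (𝟙 D) (𝟙 D) rfl
    -- the triple object T, a pullback of split epis
    obtain ⟨T, p1, p2, hT⟩ := hPb k2 ed l1 ec hed2 hec1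
    have jmKd : JointlyMonic k1 k2 := by
      intro Z u v h1 h2; exact isPb_jointlyMonic hKd u v h1 h2
    have jmKc : JointlyMonic l1 l2 := by
      intro Z u v h1 h2; exact isPb_jointlyMonic hKc u v h1 h2
    have jmT : JointlyMonic p1 p2 := by
      intro Z u v h1 h2; exact isPb_jointlyMonic hT u v h1 h2
    -- ∀ t, t ≫ p1 ≫ k2 ≫ c = t ≫ p2 ≫ l2 ≫ c
    have Ec : ∀ {Z : C} (t : Z ⟶ T), t ≫ p1 ≫ k2 ≫ c = t ≫ p2 ≫ l2 ≫ c := by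
      intro Z t
      rw [← Category.assoc p1 k2 c, hT.comm, Category.assoc, hKc.comm]
    -- universal property of triples
    have tuniv : ∀ {Z : C} (x y z : Z ⟶ D), x ≫ d = y ≫ d → y ≫ c = z ≫ c →
        ∃ l : Z ⟶ T, l ≫ (p1 ≫ k1) = x ∧ l ≫ (p1 ≫ k2) = y ∧ l ≫ (p2 ≫ l2) = z := by
      intro Z x y z hd hc
      obtain ⟨a, ⟨ha1, ha2⟩, -⟩ := hKd.univ x y hd
      obtain ⟨b, ⟨hb1, hb2⟩, -⟩ := hKc.univ y z hc
      obtain ⟨l, ⟨hl1, hl2⟩, -⟩ := hT.univ a b (by rw [ha2, hb1])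
      exact ⟨l, by rw [← Category.assoc, hl1, ha1],
        by rw [← Category.assoc, hl1, ha2],
        by rw [← Category.assoc, hl2, hb2]⟩
    -- (dom, cod) = (p1 ≫ k1, p2 ≫ l2) is a jointly monic pair
    have jmdc : JointlyMonic (p1 ≫ k1) (p2 ≫ l2) := by
      intro Z u v h1 h2
      have hm : u ≫ (p1 ≫ k2) = v ≫ (p1 ≫ k2) := by
        apply hjm
        · have h1d := h1 =≫ d
          simp only [Category.assoc] at h1d ⊢
          rw [← hKd.comm]
          exact h1d
        · have h2c := h2 =≫ c
          simp only [Category.assoc] at h2c ⊢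
          rw [Ec u, Ec v]
          exact h2c
      have hp1 : u ≫ p1 = v ≫ p1 := by
        apply jmKd
        · simp only [Category.assoc]; exact h1
        · simp only [Category.assoc]; exact hm
      have hp2 : u ≫ p2 = v ≫ p2 := by
        apply jmKc
        · rw [hT.comm] at hm
          simp only [Category.assoc]; exact hm
        · simp only [Category.assoc]; exact h2
      exact jmT u v hp1 hp2
    -- reflexivity
    obtain ⟨eT, he1, he2, he3⟩ := tuniv (𝟙 D) (𝟙 D) (𝟙 D) rfl rfl
    -- apply the Mal'tsev property to the reflexive relation (T, dom, cod)
    obtain ⟨σ, hσ1, hσ2⟩ := hM (p1 ≫ k1) (p2 ≫ l2) eT jmdc he1 he3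
    have key1 : (σ ≫ (p1 ≫ k2)) ≫ d = (p2 ≫ l2) ≫ d := by
      have h := hσ1 =≫ d
      rw [← h]
      simp only [Category.assoc]
      rw [hKd.comm]
    have key2 : (σ ≫ (p1 ≫ k2)) ≫ c = (p1 ≫ k1) ≫ c := by
      have h := hσ2 =≫ c
      rw [← h]
      simp only [Category.assoc]
      rw [Ec σ]
    intro Z x y z hd hc
    obtain ⟨l, hl1, hl2, hl3⟩ := tuniv x y z hd hc
    refine ⟨l ≫ σ ≫ (p1 ≫ k2), ?_, ?_⟩
    · have h := l ≫= key1
      have h3 := hl3 =≫ d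
      simp only [Category.assoc] at h h3 ⊢
      rw [h, h3]
    · have h := l ≫= key2
      have h1' := hl1 =≫ c
      simp only [Category.assoc] at h h1' ⊢
      rw [h, h1']
  · intro hD X D d c e hjm hed hec
    have hkd : HasKernelPair d := by
      obtain ⟨P, q1, q2, h⟩ := hPb d e d e hed hed
      exact ⟨P, q1, q2, h⟩
    have hkc : HasKernelPair c := by
      obtain ⟨P, q1, q2, h⟩ := hPb c e c e hec hec
      exact ⟨P, q1, q2, h⟩
    obtain ⟨w, hw1, hw2⟩ := hD d c hjm hkd hkc (d ≫ e) (𝟙 D) (c ≫ e)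
      (by rw [Category.assoc, hed, Category.comp_id, Category.id_comp])
      (by rw [Category.id_comp, Category.assoc, hec, Category.comp_id])
    refine ⟨w, ?_, ?_⟩
    · rw [hw1, Category.assoc, hed, Category.comp_id]
    · rw [hw2, Category.assoc, hec, Category.comp_id]
end

section
/- Let C be a category with pullbacks of split epimorphisms along split epimorphisms, kernel pairs and finite products. Then C is naturally Mal'tsev if and only if every span (D, d, c) in C carries a unique natural pregroupoid structure p which is natural with respect to all morphisms of spans: whenever f : D → D', f0 : D0 → D0', f1 : D1 → D1' satisfy d'∘f = f0∘d and c'∘f = f1∘c, then f∘p⟨x,y,z⟩ = p'⟨f∘x, f∘y, f∘z⟩ for the structure p' on (D', d', c'). -/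
open CategoryTheory

universe v u

open CategoryTheory.Limits in
/-- `C` is naturally Mal'tsev: every object carries a natural Mal'tsev operation. -/
def NaturallyMaltsev (C : Type u) [Category.{v} C] [HasFiniteProducts C] : Prop :=
  ∃ p : ∀ X : C, (X ⨯ (X ⨯ X)) ⟶ X,
    (∀ {X Y : C} (f : X ⟶ Y), p X ≫ f = prod.map f (prod.map f f) ≫ p Y) ∧
    (∀ {S X : C} (x y z : S ⟶ X),
      prod.lift x (prod.lift y y) ≫ p X = x ∧
      prod.lift y (prod.lift y z) ≫ p X = z)

section Auxiliary

open CategoryTheory.Limits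

variable {C : Type u} [Category.{v} C]

/-- Congruence for the partial Mal'tsev operation of a pregroupoid structure. -/
theorem PregroupoidStr.p_congr {D D0 D1 : C} {d : D ⟶ D0} {c : D ⟶ D1}
    (P : PregroupoidStr d c) {Z : C} {x y z x' y' z' : Z ⟶ D}
    (hx : x = x') (hy : y = y') (hz : z = z')
    {hd : x ≫ d = y ≫ d} {hc : y ≫ c = z ≫ c}
    {hd' : x' ≫ d = y' ≫ d} {hc' : y' ≫ c = z' ≫ c} :
    P.p x y z hd hc = P.p x' y' z' hd' hc' := by
  subst hx; subst hy; subst hz; rfl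

/-- Every span has a triple object, given kernel pairs and pullbacks of split epis. -/
theorem exists_tripleObj (hPb : HasPbSplit C)
    (hKp : ∀ {X Y : C} (f : X ⟶ Y), HasKernelPair f)
    {D D0 D1 : C} (d : D ⟶ D0) (c : D ⟶ D1) :
    ∃ (T : C) (dom mid cod : T ⟶ D), IsTripleObj d c dom mid cod := by
  obtain ⟨K, k1, k2, pbK⟩ := hKp d
  obtain ⟨L, l1, l2, pbL⟩ := hKp c
  obtain ⟨Δd, ⟨hΔd1, hΔd2⟩, -⟩ := pbK.univ (𝟙 D) (𝟙 D) rfl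
  obtain ⟨Δc, ⟨hΔc1, hΔc2⟩, -⟩ := pbL.univ (𝟙 D) (𝟙 D) rfl
  obtain ⟨T, p1, p2, pbT⟩ := hPb k2 Δd l1 Δc hΔd2 hΔc1
  refine ⟨T, p1 ≫ k1, p1 ≫ k2, p2 ≫ l2, ?_, ?_, ?_⟩
  · simp only [Category.assoc, pbK.comm]
  · rw [Category.assoc, Category.assoc, ← Category.assoc p1, pbT.comm,
      Category.assoc, pbL.comm]
  · intro Z x y z hxy hyz
    obtain ⟨a, ⟨ha1, ha2⟩, ua⟩ := pbK.univ x y hxy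
    obtain ⟨b, ⟨hb1, hb2⟩, ub⟩ := pbL.univ y z hyz
    obtain ⟨l, ⟨hl1, hl2⟩, ul⟩ := pbT.univ a b (by rw [ha2, hb1])
    refine ⟨l, ⟨?_, ?_, ?_⟩, ?_⟩
    · rw [← Category.assoc, hl1, ha1]
    · rw [← Category.assoc, hl1, ha2]
    · rw [← Category.assoc, hl2, hb2]
    · rintro l' ⟨hx', hy', hz'⟩
      have e1 : l' ≫ p1 = a := by
        refine ua _ ⟨?_, ?_⟩
        · rw [Category.assoc]; exact hx'
        · rw [Category.assoc]; exact hy'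
      have e2 : l' ≫ p2 = b := by
        refine ub _ ⟨?_, ?_⟩
        · rw [Category.assoc, ← pbT.comm, ← Category.assoc, Category.assoc]; exact hy'
        · rw [Category.assoc]; exact hz'
      exact ul _ ⟨e1, e2⟩

section WithProducts

variable [HasFiniteProducts C]
variable (q : ∀ X : C, (X ⨯ (X ⨯ X)) ⟶ X)
variable (hqnat : ∀ {X Y : C} (f : X ⟶ Y), q X ≫ f = prod.map f (prod.map f f) ≫ q Y)
variable (hqm : ∀ {S X : C} (x y z : S ⟶ X),
      prod.lift x (prod.lift y y) ≫ q X = x ∧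
      prod.lift y (prod.lift y z) ≫ q X = z)

include hqnat in
theorem liftq_comp {Z X Y : C} (a b c' : Z ⟶ X) (g : X ⟶ Y) :
    (prod.lift a (prod.lift b c') ≫ q X) ≫ g
      = prod.lift (a ≫ g) (prod.lift (b ≫ g) (c' ≫ g)) ≫ q Y := by
  rw [Category.assoc, hqnat g, ← Category.assoc]
  congr 1
  simp

include hqnat hqm

/-- The canonical pregroupoid structure coming from a natural Mal'tsev operation. -/
noncomputable def canonPregroupoid {D D0 D1 : C} (d : D ⟶ D0) (c : D ⟶ D1) :
    PregroupoidStr d c where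
  p {Z} x y z _ _ := prod.lift x (prod.lift y z) ≫ q D
  natural {Z' Z} h x y z _ _ _ _ := by
    rw [← Category.assoc, prod.comp_lift, prod.comp_lift]
  comp_d {Z} x y z hd hc := by
    show (prod.lift x (prod.lift y z) ≫ q D) ≫ d = z ≫ d
    rw [liftq_comp q hqnat, hd]
    exact (hqm (y ≫ d) (y ≫ d) (z ≫ d)).2
  comp_c {Z} x y z hd hc := by
    show (prod.lift x (prod.lift y z) ≫ q D) ≫ c = x ≫ c
    rw [liftq_comp q hqnat, ← hc]
    exact (hqm (x ≫ c) (y ≫ c) (y ≫ c)).1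
  p_xyy {Z} x y hd hc := (hqm x y y).1
  p_yyz {Z} y z hd hc := (hqm y y z).2

/-- Any pregroupoid structure is forced to be the canonical one. -/
theorem pregroupoid_eq_canon (hPb : HasPbSplit C)
    (hKp : ∀ {X Y : C} (f : X ⟶ Y), HasKernelPair f)
    {D D0 D1 : C} {d : D ⟶ D0} {c : D ⟶ D1} (P : PregroupoidStr d c)
    {Z : C} (x y z : Z ⟶ D) (hd : x ≫ d = y ≫ d) (hc : y ≫ c = z ≫ c) :
    P.p x y z hd hc = prod.lift x (prod.lift y z) ≫ q D := by
  obtain ⟨T, dom, mid, cod, tri⟩ := exists_tripleObj hPb hKp d c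
  obtain ⟨l, ⟨hl1, hl2, hl3⟩, ul⟩ := tri.univ x y z hd hc
  obtain ⟨t1, ⟨h11, h12, h13⟩, -⟩ := tri.univ x y y hd rfl
  obtain ⟨t2, ⟨h21, h22, h23⟩, -⟩ := tri.univ y y y rfl rfl
  obtain ⟨t3, ⟨h31, h32, h33⟩, -⟩ := tri.univ y y z rfl hc
  set m := P.p dom mid cod tri.d_dom tri.c_mid with hm
  have hnat : ∀ (t : Z ⟶ T) (ed : (t ≫ dom) ≫ d = (t ≫ mid) ≫ d)
      (ec : (t ≫ mid) ≫ c = (t ≫ cod) ≫ c),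
      P.p (t ≫ dom) (t ≫ mid) (t ≫ cod) ed ec = t ≫ m :=
    fun t ed ec => P.natural t dom mid cod tri.d_dom tri.c_mid ed ec
  have had : ∀ t : Z ⟶ T, (t ≫ dom) ≫ d = (t ≫ mid) ≫ d := by
    intro t; simp only [Category.assoc, tri.d_dom]
  have hac : ∀ t : Z ⟶ T, (t ≫ mid) ≫ c = (t ≫ cod) ≫ c := by
    intro t; simp only [Category.assoc, tri.c_mid]
  -- the three degenerate triples evaluated at m
  have ht1 : t1 ≫ m = x := by
    rw [← hnat t1 (had t1) (hac t1)]
    exact (P.p_congr h11 h12 h13).trans (P.p_xyy x y hd rfl)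
  have ht2 : t2 ≫ m = y := by
    rw [← hnat t2 (had t2) (hac t2)]
    exact (P.p_congr h21 h22 h23).trans (P.p_xyy y y rfl rfl)
  have ht3 : t3 ≫ m = z := by
    rw [← hnat t3 (had t3) (hac t3)]
    exact (P.p_congr h31 h32 h33).trans (P.p_yyz y z rfl hc)
  -- the Mal'tsev combination of the degenerate triples is the given triple
  have hu : prod.lift t1 (prod.lift t2 t3) ≫ q T = l := by
    refine ul _ ⟨?_, ?_, ?_⟩
    · rw [liftq_comp q hqnat, h11, h21, h31]
      exact (hqm x y y).1
    · rw [liftq_comp q hqnat, h12, h22, h32]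
      exact (hqm y y y).1
    · rw [liftq_comp q hqnat, h13, h23, h33]
      exact (hqm y y z).2
  have step : P.p x y z hd hc = l ≫ m :=
    (P.p_congr hl1.symm hl2.symm hl3.symm).trans (hnat l (had l) (hac l))
  rw [step, ← hu, liftq_comp q hqnat, ht1, ht2, ht3]

end WithProducts

end Auxiliary

theorem statement16 {C : Type u} [Category.{v} C] [Limits.HasFiniteProducts C]
    (hPb : HasPbSplit C) (hKp : ∀ {X Y : C} (f : X ⟶ Y), HasKernelPair f) :
    NaturallyMaltsev C ↔
      ((∀ {D D0 D1 : C} (d : D ⟶ D0) (c : D ⟶ D1), Nonempty (PregroupoidStr d c)) ∧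
       (∀ {D D0 D1 : C} (d : D ⟶ D0) (c : D ⟶ D1) (P P' : PregroupoidStr d c)
         {Z : C} (x y z : Z ⟶ D) (hd : x ≫ d = y ≫ d) (hc : y ≫ c = z ≫ c),
         P.p x y z hd hc = P'.p x y z hd hc) ∧
       (∀ {D D0 D1 D' D0' D1' : C} (d : D ⟶ D0) (c : D ⟶ D1)
         (d' : D' ⟶ D0') (c' : D' ⟶ D1')
         (P : PregroupoidStr d c) (P' : PregroupoidStr d' c')
         (f : D ⟶ D') (f0 : D0 ⟶ D0') (f1 : D1 ⟶ D1'),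
         d ≫ f0 = f ≫ d' → c ≫ f1 = f ≫ c' →
         ∀ {Z : C} (x y z : Z ⟶ D) (hd : x ≫ d = y ≫ d) (hc : y ≫ c = z ≫ c)
           (hd' : (x ≫ f) ≫ d' = (y ≫ f) ≫ d') (hc' : (y ≫ f) ≫ c' = (z ≫ f) ≫ c'),
           P.p x y z hd hc ≫ f = P'.p (x ≫ f) (y ≫ f) (z ≫ f) hd' hc')) := by
  open CategoryTheory.Limits in
  constructor
  · rintro ⟨q, hqnat, hqm⟩
    refine ⟨fun d c => ⟨canonPregroupoid q hqnat hqm d c⟩, ?_, ?_⟩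
    · intro D D0 D1 d c P P' Z x y z hd hc
      rw [pregroupoid_eq_canon q hqnat hqm hPb hKp P,
        pregroupoid_eq_canon q hqnat hqm hPb hKp P']
    · intro D D0 D1 D' D0' D1' d c d' c' P P' f f0 f1 _ _ Z x y z hd hc hd' hc'
      rw [pregroupoid_eq_canon q hqnat hqm hPb hKp P,
        pregroupoid_eq_canon q hqnat hqm hPb hKp P']
      exact liftq_comp q hqnat x y z f
  · rintro ⟨hEx, hUniq, hNat⟩
    have P : ∀ X : C, PregroupoidStr (terminal.from X) (terminal.from X) :=
      fun X => Classical.choice (hEx _ _)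
    refine ⟨fun X => (P X).p prod.fst (prod.snd ≫ prod.fst) (prod.snd ≫ prod.snd)
        (Subsingleton.elim _ _) (Subsingleton.elim _ _), ?_, ?_⟩
    · intro X Y f
      have h1 := hNat (terminal.from X) (terminal.from X)
        (terminal.from Y) (terminal.from Y) (P X) (P Y) f (𝟙 _) (𝟙 _)
        (Subsingleton.elim _ _) (Subsingleton.elim _ _)
        prod.fst (prod.snd ≫ prod.fst) (prod.snd ≫ prod.snd)
        (Subsingleton.elim _ _) (Subsingleton.elim _ _)
        (Subsingleton.elim _ _) (Subsingleton.elim _ _)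
      have h2 := (P Y).natural (prod.map f (prod.map f f))
        prod.fst (prod.snd ≫ prod.fst) (prod.snd ≫ prod.snd)
        (Subsingleton.elim _ _) (Subsingleton.elim _ _)
        (Subsingleton.elim _ _) (Subsingleton.elim _ _)
      rw [h1, ← h2]
      exact (P Y).p_congr (by simp) (by simp) (by simp)
    · intro S X x y z
      have h1 := (P X).natural (prod.lift x (prod.lift y y))
        prod.fst (prod.snd ≫ prod.fst) (prod.snd ≫ prod.snd)
        (Subsingleton.elim _ _) (Subsingleton.elim _ _)
        (Subsingleton.elim _ _) (Subsingleton.elim _ _)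
      have h2 := (P X).natural (prod.lift y (prod.lift y z))
        prod.fst (prod.snd ≫ prod.fst) (prod.snd ≫ prod.snd)
        (Subsingleton.elim _ _) (Subsingleton.elim _ _)
        (Subsingleton.elim _ _) (Subsingleton.elim _ _)
      constructor
      · rw [← h1]
        exact Eq.trans ((P X).p_congr (by exact prod.lift_fst _ _)
            (by exact (prod.lift_snd_assoc _ _ _).trans (prod.lift_fst _ _))
            (by exact (prod.lift_snd_assoc _ _ _).trans (prod.lift_snd _ _)))
          ((P X).p_xyy x y (Subsingleton.elim _ _) rfl)
      · rw [← h2]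
        exact Eq.trans ((P X).p_congr (by exact prod.lift_fst _ _)
            (by exact (prod.lift_snd_assoc _ _ _).trans (prod.lift_fst _ _))
            (by exact (prod.lift_snd_assoc _ _ _).trans (prod.lift_snd _ _)))
          ((P X).p_yyz y z (Subsingleton.elim _ _) (Subsingleton.elim _ _))
end
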